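/- arXiv:math/0503105 — 2 statements merged into one kernel-verified Lean document; each statement's English description precedes it below -/
import Mathlib

section
/- Let p be a prime with p ≡ 1 (mod 6) and let s be an integer not divisible by p. Then |T_3(χ, s)| ≤ 3√p, where T_3(χ, s) = ∑_{x=0}^{p-1} χ(x)·e_p(s·x³) and χ is the Legendre symbol modulo p. -/
/-!
For a character `ψ` of exact order `n` on `𝔽_q` (with `n ∣ q - 1`), the number of solutions of
`x ^ n = y` is `∑_{j < n} ψ(y) ^ j` for `y ≠ 0`. Hence `∑ₓ χ(xⁿ) e(xⁿ) = ∑_{j < n} g(χψʲ, e)`,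
a sum of `n` Gauss sums. When no `χψʲ` is trivial each has absolute value `√q`. For the Legendre
symbol `χ` and `n = 3` we have `χ(x³) = χ(x)`, and `χψʲ` is never trivial since `χ` has order 2
and `ψʲ` has odd order.
-/

open Finset

namespace FiniteField

variable {F : Type*} [Field F] [Fintype F]

theorem exists_isPrimitiveRoot_of_dvd {n : ℕ} (hn : n ∣ Fintype.card F - 1) :
    ∃ ζ : F, IsPrimitiveRoot ζ n := by
  classical
  obtain ⟨g, hg⟩ := IsCyclic.exists_ofOrder_eq_natCard (α := Fˣ)
  rw [Nat.card_eq_fintype_card, Fintype.card_units] at hg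
  refine ⟨(g ^ ((Fintype.card F - 1) / n) : Fˣ), IsPrimitiveRoot.coe_units_iff.mpr ?_⟩
  rw [IsPrimitiveRoot.iff_orderOf, ← hg,
    orderOf_pow_orderOf_div (orderOf_pos g).ne' (hg ▸ hn)]

end FiniteField

namespace MulChar

theorem isPrimitiveRoot_apply_of_forall_mem_zpowers {M R : Type*} [CommMonoid M]
    [CommMonoidWithZero R] {ψ : MulChar M R} {g : Mˣ} (hg : ∀ x, x ∈ Subgroup.zpowers g) :
    IsPrimitiveRoot (ψ g) (orderOf ψ) where
  pow_eq_one := by rw [← pow_apply_coe, pow_orderOf_eq_one, one_apply_coe]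
  dvd_of_pow_eq_one l hl := by
    refine orderOf_dvd_of_pow_eq_one ((eq_iff hg _ _).mpr ?_)
    rw [pow_apply_coe, hl, one_apply_coe]

variable {F : Type*} [Field F]

section CommMonoidWithZero

variable [Finite F] {R : Type*} [CommMonoidWithZero R]

theorem apply_eq_one_iff_exists_pow_eq {ψ : MulChar F R} {a : F} (ha : a ≠ 0) :
    ψ a = 1 ↔ ∃ b, b ^ orderOf ψ = a := by
  constructor
  · intro h
    obtain ⟨g, hg⟩ := IsCyclic.exists_generator (α := Fˣ)
    obtain ⟨k, hk : g ^ k = Units.mk0 a ha⟩ :=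
      mem_powers_iff_mem_zpowers.mpr (hg (Units.mk0 a ha))
    have hdvd : orderOf ψ ∣ k := by
      refine (isPrimitiveRoot_apply_of_forall_mem_zpowers hg).dvd_of_pow_eq_one k ?_
      rw [← map_pow, ← Units.val_pow_eq_pow_val, hk, Units.val_mk0, h]
    obtain ⟨m, rfl⟩ := hdvd
    refine ⟨(g ^ m : Fˣ), ?_⟩
    rw [← Units.val_pow_eq_pow_val, ← pow_mul, mul_comm, hk, Units.val_mk0]
  · rintro ⟨b, rfl⟩
    have hb : b ≠ 0 := by rintro rfl; simp [zero_pow ψ.orderOf_pos.ne'] at ha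
    rw [map_pow, ← pow_apply' _ ψ.orderOf_pos.ne', pow_orderOf_eq_one, one_apply hb.isUnit]

theorem apply_pow_orderOf_eq_one (ψ : MulChar F R) {a : F} (ha : a ≠ 0) :
    ψ a ^ orderOf ψ = 1 := by
  rw [← pow_apply' _ ψ.orderOf_pos.ne', pow_orderOf_eq_one, one_apply ha.isUnit]

end CommMonoidWithZero

variable [Fintype F] {R : Type*} [CommRing R] [IsDomain R]

theorem card_pow_eq_eq_sum_apply_pow [DecidableEq F] (ψ : MulChar F R) {a : F} (ha : a ≠ 0) :
    (#{x : F | x ^ orderOf ψ = a} : R) = ∑ j ∈ range (orderOf ψ), ψ a ^ j := by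
  by_cases h : ∃ b, b ^ orderOf ψ = a
  · obtain ⟨ζ, hζ⟩ := FiniteField.exists_isPrimitiveRoot_of_dvd ψ.orderOf_dvd_card_sub_one
    have hroots : ({x : F | x ^ orderOf ψ = a} : Finset F) =
        (Polynomial.nthRoots (orderOf ψ) a).toFinset := by
      ext x
      simp [Polynomial.mem_nthRoots ψ.orderOf_pos]
    rw [hroots, Multiset.toFinset_card_of_nodup (hζ.nthRoots_nodup ha), hζ.card_nthRoots,
      if_pos h, (apply_eq_one_iff_exists_pow_eq ha).mpr h]
    simp
  · have hne : ψ a ≠ 1 := mt (apply_eq_one_iff_exists_pow_eq ha).mp h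
    have hgeom := geom_sum_mul (ψ a) (orderOf ψ)
    rw [apply_pow_orderOf_eq_one ψ ha, sub_self] at hgeom
    have hcard : #{x : F | x ^ orderOf ψ = a} = 0 :=
      card_eq_zero.mpr (filter_eq_empty_iff.mpr fun x _ hx ↦ h ⟨x, hx⟩)
    rw [hcard, Nat.cast_zero, (mul_eq_zero.mp hgeom).resolve_right (sub_ne_zero.mpr hne)]

theorem sum_comp_pow_orderOf (ψ : MulChar F R) (f : F → R) (hf : f 0 = 0) :
    ∑ x, f (x ^ orderOf ψ) = ∑ j ∈ range (orderOf ψ), ∑ y, (ψ ^ j) y * f y := by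
  classical
  rw [sum_comm, ← sum_fiberwise' univ (· ^ orderOf ψ)]
  refine sum_congr rfl fun y _ ↦ ?_
  rcases eq_or_ne y 0 with rfl | hy
  · simp [hf]
  · rw [sum_const, nsmul_eq_mul, card_pow_eq_eq_sum_apply_pow ψ hy, sum_mul]
    refine sum_congr rfl fun j _ ↦ ?_
    rw [show (ψ ^ j) y = ψ y ^ j from pow_apply_coe ψ j (Units.mk0 y hy)]

theorem sum_apply_pow_mul_addChar_pow_eq_sum_gaussSum (χ ψ : MulChar F R) (e : AddChar F R) :
    ∑ x, χ (x ^ orderOf ψ) * e (x ^ orderOf ψ) =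
      ∑ j ∈ range (orderOf ψ), gaussSum (χ * ψ ^ j) e := by
  rw [sum_comp_pow_orderOf ψ (fun y ↦ χ y * e y) (by simp)]
  refine sum_congr rfl fun j _ ↦ sum_congr rfl fun y _ ↦ ?_
  rw [mul_apply, mul_left_comm, mul_assoc]

theorem IsQuadratic.mul_ne_one {M R : Type*} [CommMonoid M] [CommRing R] {χ φ : MulChar M R}
    (hχ : χ.IsQuadratic) (hχ1 : χ ≠ 1) {n : ℕ} (hn : Odd n) (hφ : φ ^ n = 1) : χ * φ ≠ 1 := by
  intro h
  apply hχ1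
  calc χ = χ ^ n * φ ^ n := by rw [hχ.pow_odd hn, hφ, mul_one]
    _ = 1 := by rw [← mul_pow, h, one_pow]

end MulChar

theorem norm_gaussSum_eq_sqrt_card {R : Type*} [Field R] [Fintype R] {χ : MulChar R ℂ}
    (hχ : χ ≠ 1) {ψ : AddChar R ℂ} (hψ : ψ.IsPrimitive) : ‖gaussSum χ ψ‖ = √(Fintype.card R) := by
  have h : (‖gaussSum χ ψ‖ : ℂ) ^ 2 = Fintype.card R := by
    rw [← Complex.mul_conj', ← Complex.star_def, star_gaussSum_eq,
      gaussSum_mul_gaussSum_eq_card hχ hψ]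
  have h' : ‖gaussSum χ ψ‖ ^ 2 = Fintype.card R := by exact_mod_cast h
  rw [← h', Real.sqrt_sq (norm_nonneg _)]

theorem norm_sum_apply_pow_mul_addChar_pow_le {F : Type*} [Field F] [Fintype F]
    {χ ψ : MulChar F ℂ} (hχψ : ∀ j < orderOf ψ, χ * ψ ^ j ≠ 1) {e : AddChar F ℂ}
    (he : e.IsPrimitive) :
    ‖∑ x, χ (x ^ orderOf ψ) * e (x ^ orderOf ψ)‖ ≤ orderOf ψ * √(Fintype.card F) := by
  rw [MulChar.sum_apply_pow_mul_addChar_pow_eq_sum_gaussSum]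
  calc ‖∑ j ∈ range (orderOf ψ), gaussSum (χ * ψ ^ j) e‖
      ≤ ∑ j ∈ range (orderOf ψ), ‖gaussSum (χ * ψ ^ j) e‖ := norm_sum_le _ _
    _ = orderOf ψ * √(Fintype.card F) := by
      rw [sum_congr rfl fun j hj ↦ norm_gaussSum_eq_sqrt_card (hχψ j (mem_range.mp hj)) he]
      simp

theorem ZMod.sum_range_eq_sum_univ {M : Type*} [AddCommMonoid M] (n : ℕ) [NeZero n]
    (f : ZMod n → M) : ∑ x ∈ range n, f x = ∑ x : ZMod n, f x :=
  sum_nbij' (↑) ZMod.val (by simp) (by simp [ZMod.val_lt])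
    (fun _ hx ↦ ZMod.val_cast_of_lt (mem_range.mp hx)) (fun x _ ↦ ZMod.natCast_zmod_val x)
    (fun _ _ ↦ rfl)

theorem sum_range_legendreSym_mul_exp_eq (p : ℕ) [Fact p.Prime] (s : ℤ) (d : ℕ) :
    ∑ x ∈ range p, (legendreSym p (x : ℤ) : ℂ) *
        Complex.exp (2 * Real.pi * Complex.I * ((s * (x : ℤ) ^ d : ℤ) : ℂ) / p) =
      ∑ x : ZMod p, (quadraticChar (ZMod p)).ringHomComp (Int.castRingHom ℂ) x *
        (ZMod.stdAddChar.mulShift (s : ZMod p)) (x ^ d) := by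
  rw [← ZMod.sum_range_eq_sum_univ]
  refine sum_congr rfl fun x _ ↦ ?_
  rw [AddChar.mulShift_apply, ← ZMod.stdAddChar_coe, MulChar.ringHomComp_apply, legendreSym]
  push_cast
  rfl

/-- For a prime `p ≡ 1 (mod 6)` and `s` not divisible by `p`, the twisted cubic
sum satisfies `|T₃(χ, s)| ≤ 3√p`, where `T₃(χ, s) = ∑ χ(x) e_p(s x³)`. -/
theorem twisted_cubic_sum_upper_bound
    (p : ℕ) [hp : Fact p.Prime] (hp6 : p % 6 = 1)
    (s : ℤ) (hs : ¬ (p : ℤ) ∣ s) :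
    ‖∑ x ∈ Finset.range p,
        (legendreSym p (x : ℤ) : ℂ) *
          Complex.exp (2 * Real.pi * Complex.I * ((s * (x : ℤ) ^ 3 : ℤ) : ℂ) / p)‖
      ≤ 3 * Real.sqrt p := by
  set χ := (quadraticChar (ZMod p)).ringHomComp (Int.castRingHom ℂ)
  have hχ : χ.IsQuadratic := (quadraticChar_isQuadratic (ZMod p)).comp _
  have hχ1 : χ ≠ 1 := (MulChar.ringHomComp_ne_one_iff Int.cast_injective).mpr
    (quadraticChar_ne_one (by rw [ZMod.ringChar_zmod_n]; omega))
  have hχ_cube (x : ZMod p) : χ (x ^ 3) = χ x := by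
    rw [map_pow, ← MulChar.pow_apply' χ three_ne_zero, hχ.pow_odd (by decide)]
  obtain ⟨ψ, hψ⟩ := MulChar.exists_mulChar_orderOf (ZMod p) (n := 3)
    (by rw [ZMod.card]; omega) (Complex.isPrimitiveRoot_exp 3 (by norm_num))
  have he : (ZMod.stdAddChar.mulShift (s : ZMod p)).IsPrimitive :=
    AddChar.IsPrimitive.of_ne_one <| ZMod.isPrimitive_stdAddChar p <| by
      rwa [Ne, ZMod.intCast_zmod_eq_zero_iff_dvd]
  have hbound := norm_sum_apply_pow_mul_addChar_pow_le
    (fun j _ ↦ hχ.mul_ne_one hχ1 (by decide : Odd 3) (by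
      rw [← pow_mul, mul_comm, pow_mul, ← hψ, pow_orderOf_eq_one, one_pow])) he
  rw [hψ, ZMod.card] at hbound
  simp only [hχ_cube, Nat.cast_ofNat] at hbound
  rwa [sum_range_legendreSym_mul_exp_eq]
end

section
/- Let p be an odd prime and let a, b be integers not divisible by p such that a·b is a quadratic non-residue modulo p. Then the Salié sum vanishes: ∑_{x ∈ (ZMod p)ˣ} χ(x)·e_p(a·x + b·x⁻¹) = 0. -/
/-- For an odd prime `p` and integers `a, b` not divisible by `p` such that `a·b`
is a quadratic non-residue mod `p`, the Salié sum
`S(a, b) = ∑ χ(x) e_p(a x + b x⁻¹)` vanishes. -/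
theorem salie_sum_eq_zero_of_nonresidue
    (p : ℕ) [hp : Fact p.Prime] (hodd : p ≠ 2)
    (a b : ℤ) (hap : ¬ (p : ℤ) ∣ a) (hbp : ¬ (p : ℤ) ∣ b)
    (hNQR : ¬ IsSquare ((a * b : ℤ) : ZMod p)) :
    ∑ x : (ZMod p)ˣ,
        (legendreSym p (((x : ZMod p)).val : ℤ) : ℂ) *
          Complex.exp (2 * Real.pi * Complex.I *
            (((a * ((x : ZMod p)) + b * ((x⁻¹ : (ZMod p)ˣ) : ZMod p) : ZMod p).val : ℂ)) / p)
      = 0 := by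
  have ha0 : ((a : ZMod p)) ≠ 0 := by
    rwa [Ne, ZMod.intCast_zmod_eq_zero_iff_dvd]
  have hb0 : ((b : ZMod p)) ≠ 0 := by
    rwa [Ne, ZMod.intCast_zmod_eq_zero_iff_dvd]
  set A : (ZMod p)ˣ := Units.mk0 _ ha0 with hA
  set B : (ZMod p)ˣ := Units.mk0 _ hb0 with hB
  have hAv : (A : ZMod p) = (a : ZMod p) := rfl
  have hBv : (B : ZMod p) = (b : ZMod p) := rfl
  -- legendre to quadraticChar
  have hchar : ∀ x : (ZMod p)ˣ, (legendreSym p (((x : ZMod p)).val : ℤ)) = quadraticChar (ZMod p) (x : ZMod p) := by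
    intro x
    unfold legendreSym
    congr 1
    push_cast
    simp [ZMod.natCast_val, ZMod.cast_id]
  -- quadratic char of inverse of a unit
  have hinv : ∀ u : (ZMod p)ˣ, quadraticChar (ZMod p) ((u⁻¹ : (ZMod p)ˣ) : ZMod p)
      = quadraticChar (ZMod p) (u : ZMod p) := by
    intro u
    have h1 : quadraticChar (ZMod p) ((u⁻¹ : (ZMod p)ˣ) : ZMod p)
        * quadraticChar (ZMod p) (u : ZMod p) = 1 := by
      rw [← map_mul]
      norm_cast
      simp
    rcases quadraticChar_dichotomy (F := ZMod p) (a := (u : ZMod p)) (Units.ne_zero u) with h | h <;>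
      rw [h] at h1 ⊢ <;> omega
  -- the twist unit
  have hNQR' : ¬ IsSquare ((B * A⁻¹ : (ZMod p)ˣ) : ZMod p) := by
    rintro ⟨r, hr⟩
    apply hNQR
    refine ⟨r * (a : ZMod p), ?_⟩
    push_cast
    have hr' : (b : ZMod p) = r * r * (a : ZMod p) := by
      have : (b : ZMod p) * (a : ZMod p)⁻¹ = r * r := by
        simpa [hBv, hAv] using hr
      field_simp at this
      linear_combination this
    rw [hr']; ring
  have hu : quadraticChar (ZMod p) ((B * A⁻¹ : (ZMod p)ˣ) : ZMod p) = -1 :=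
    quadraticChar_neg_one_iff_not_isSquare.mpr hNQR'
  set f : (ZMod p)ˣ → ℂ := fun x =>
    (legendreSym p (((x : ZMod p)).val : ℤ) : ℂ) *
      Complex.exp (2 * Real.pi * Complex.I *
        (((a * ((x : ZMod p)) + b * ((x⁻¹ : (ZMod p)ˣ) : ZMod p) : ZMod p).val : ℂ)) / p) with hf
  have key : ∀ x : (ZMod p)ˣ, f (B * A⁻¹ * x⁻¹) = - f x := by
    intro x
    have hexp : ((a : ZMod p) * ((B * A⁻¹ * x⁻¹ : (ZMod p)ˣ) : ZMod p)
        + (b : ZMod p) * (((B * A⁻¹ * x⁻¹)⁻¹ : (ZMod p)ˣ) : ZMod p))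
        = (a : ZMod p) * (x : ZMod p) + (b : ZMod p) * ((x⁻¹ : (ZMod p)ˣ) : ZMod p) := by
      have hx0 : (x : ZMod p) ≠ 0 := x.ne_zero
      simp only [mul_inv_rev, inv_inv, Units.val_mul, Units.val_inv_eq_inv_val, hAv, hBv]
      field_simp
      ring
    have hc : legendreSym p ((((B * A⁻¹ * x⁻¹ : (ZMod p)ˣ) : ZMod p)).val : ℤ)
        = - legendreSym p (((x : ZMod p)).val : ℤ) := by
      rw [hchar, hchar]
      have : ((B * A⁻¹ * x⁻¹ : (ZMod p)ˣ) : ZMod p)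
          = ((B * A⁻¹ : (ZMod p)ˣ) : ZMod p) * ((x⁻¹ : (ZMod p)ˣ) : ZMod p) := by push_cast; ring
      rw [this, map_mul, hu, hinv]
      ring
    simp only [hf]
    rw [hexp, hc]
    push_cast
    ring
  have hSiff : ∑ x : (ZMod p)ˣ, f x = - ∑ x : (ZMod p)ˣ, f x := by
    conv_lhs => rw [← Equiv.sum_comp ((Equiv.inv (ZMod p)ˣ).trans (Equiv.mulLeft (B * A⁻¹))) f]
    simp only [Equiv.trans_apply, Equiv.inv_apply, Equiv.coe_mulLeft]
    rw [← Finset.sum_neg_distrib]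
    exact Finset.sum_congr rfl fun x _ => key x
  have h2 : (2 : ℂ) * ∑ x : (ZMod p)ˣ, f x = 0 := by linear_combination hSiff
  have := mul_eq_zero.mp h2
  simpa using this
end
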